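/- arXiv:1703.02622 — 7 statements merged into one kernel-verified Lean document; each statement's English description precedes it below -/
import Mathlib

section
/- Fix η > 0 and a nonzero vector g ∈ ℝ^d. The unique minimizer over w ∈ ℝ^d of the function w ↦ ψ(w)/η + ⟨g, w⟩, where ψ(w) = (‖w‖+1)log(‖w‖+1) − ‖w‖, is w* = −(g/‖g‖)·(exp(η‖g‖) − 1). -/
/-!
With `a = η‖g‖` and `s = ‖w‖ + 1`, the scaled objective `η f(w)` splits as
`(s log s - ((1 + a) s - exp a)) + η (⟪g, w⟫ + ‖g‖‖w‖) + (1 + a - exp a)`.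
The first gap is nonnegative by `exp x ≥ x + 1` at `x = a - log s` (Fenchel–Young for
`s log s`) and vanishes only for `s = exp a`; the second is nonnegative by Cauchy–Schwarz and
vanishes only when `w` points opposite to `g`. Both vanish exactly at
`w* = -(exp a - 1) g / ‖g‖`, so `1 + a - exp a` is the minimum of `η f` and `w*` its unique
minimizer.
-/

open Real
open scoped RealInnerProductSpace

theorem eq_zero_of_exp_le_add_one {x : ℝ} (h : exp x ≤ x + 1) : x = 0 := by
  by_contra hx
  exact (add_one_lt_exp hx).not_ge h

theorem mul_log_sub_add_exp_eq (a : ℝ) {s : ℝ} (hs : 0 < s) :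
    s * log s - (1 + a) * s + exp a = s * (exp (a - log s) - (a - log s + 1)) := by
  rw [exp_sub, exp_log hs]
  field_simp
  ring

theorem one_add_mul_sub_exp_le_mul_log (a : ℝ) {s : ℝ} (hs : 0 < s) :
    (1 + a) * s - exp a ≤ s * log s := by
  linarith [mul_log_sub_add_exp_eq a hs,
    mul_nonneg hs.le (sub_nonneg.2 (add_one_le_exp (a - log s)))]

theorem eq_exp_of_mul_log_le {a s : ℝ} (hs : 0 < s) (h : s * log s ≤ (1 + a) * s - exp a) :
    s = exp a := by
  have hgap : s * (exp (a - log s) - (a - log s + 1)) ≤ 0 := by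
    linarith [mul_log_sub_add_exp_eq a hs]
  have hx := eq_zero_of_exp_le_add_one (sub_nonpos.1 (nonpos_of_mul_nonpos_right hgap hs))
  rw [← exp_log hs, sub_eq_zero.1 hx]

variable {E : Type*} [NormedAddCommGroup E] [InnerProductSpace ℝ E]

theorem neg_norm_mul_norm_le_real_inner (x y : E) : -(‖x‖ * ‖y‖) ≤ ⟪x, y⟫ :=
  neg_le_of_abs_le (abs_real_inner_le_norm x y)

theorem eq_smul_of_real_inner_eq_neg_norm_mul {g w : E} (hg : g ≠ 0)
    (h : ⟪g, w⟫ = -(‖g‖ * ‖w‖)) : w = (-‖w‖ / ‖g‖) • g := by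
  have h' : ⟪g, -w⟫ = ‖g‖ * ‖-w‖ := by rw [inner_neg_right, h, norm_neg, neg_neg]
  rw [inner_eq_norm_mul_iff_real, norm_neg] at h'
  have hG : ‖g‖ ≠ 0 := norm_ne_zero_iff.2 hg
  rw [div_eq_inv_mul, mul_smul, neg_smul, h', ← smul_neg, neg_neg, inv_smul_smul₀ hG]

noncomputable def ftrlObjective (η : ℝ) (g w : E) : ℝ :=
  ((‖w‖ + 1) * log (‖w‖ + 1) - ‖w‖) / η + ⟪g, w⟫

noncomputable def ftrlMinimizer (η : ℝ) (g : E) : E :=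
  (-(exp (η * ‖g‖) - 1) / ‖g‖) • g

theorem mul_ftrlObjective_eq {η : ℝ} (hη : 0 < η) (g w : E) :
    η * ftrlObjective η g w =
      ((‖w‖ + 1) * log (‖w‖ + 1) - ((1 + η * ‖g‖) * (‖w‖ + 1) - exp (η * ‖g‖)))
        + η * (⟪g, w⟫ + ‖g‖ * ‖w‖) + (1 + η * ‖g‖ - exp (η * ‖g‖)) := by
  unfold ftrlObjective
  field_simp
  ring

theorem one_add_sub_exp_le_mul_ftrlObjective {η : ℝ} (hη : 0 < η) (g w : E) :
    1 + η * ‖g‖ - exp (η * ‖g‖) ≤ η * ftrlObjective η g w := by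
  have hlog := one_add_mul_sub_exp_le_mul_log (η * ‖g‖) (by positivity : 0 < ‖w‖ + 1)
  have hinner := mul_nonneg hη.le (neg_le_iff_add_nonneg.1 (neg_norm_mul_norm_le_real_inner g w))
  rw [mul_ftrlObjective_eq hη]
  linarith

theorem mul_ftrlObjective_ftrlMinimizer {η : ℝ} (hη : 0 < η) {g : E} (hg : g ≠ 0) :
    η * ftrlObjective η g (ftrlMinimizer η g) = 1 + η * ‖g‖ - exp (η * ‖g‖) := by
  have hG : 0 < ‖g‖ := norm_pos_iff.2 hg
  have hr : 0 < exp (η * ‖g‖) - 1 := sub_pos.2 (one_lt_exp_iff.2 (by positivity))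
  have hnorm : ‖ftrlMinimizer η g‖ = exp (η * ‖g‖) - 1 := by
    rw [ftrlMinimizer, norm_smul, norm_div, norm_neg, norm_norm, Real.norm_of_nonneg hr.le]
    field_simp
  have hinner : ⟪g, ftrlMinimizer η g⟫ = -(‖g‖ * (exp (η * ‖g‖) - 1)) := by
    rw [ftrlMinimizer, real_inner_smul_right, real_inner_self_eq_norm_sq]
    field_simp
  rw [mul_ftrlObjective_eq hη, hnorm, hinner, sub_add_cancel, log_exp]
  ring

theorem eq_ftrlMinimizer_of_mul_ftrlObjective_le {η : ℝ} (hη : 0 < η) {g w : E} (hg : g ≠ 0)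
    (h : η * ftrlObjective η g w ≤ 1 + η * ‖g‖ - exp (η * ‖g‖)) : w = ftrlMinimizer η g := by
  have hlog := one_add_mul_sub_exp_le_mul_log (η * ‖g‖) (by positivity : 0 < ‖w‖ + 1)
  have hinner := neg_le_iff_add_nonneg.1 (neg_norm_mul_norm_le_real_inner g w)
  have hinnerη := mul_nonneg hη.le hinner
  rw [mul_ftrlObjective_eq hη] at h
  have hnorm : ‖w‖ + 1 = exp (η * ‖g‖) := eq_exp_of_mul_log_le (by positivity) (by linarith)
  have hdir : ⟪g, w⟫ = -(‖g‖ * ‖w‖) := by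
    have : η * (⟪g, w⟫ + ‖g‖ * ‖w‖) = 0 := by linarith
    linarith [(mul_eq_zero.1 this).resolve_left hη.ne']
  rw [eq_smul_of_real_inner_eq_neg_norm_mul hg hdir, ftrlMinimizer, ← hnorm, add_sub_cancel_right]

/-- Closed form of the FTRL update with regularizer ψ(w)/η plus linear term. -/
theorem stmt2 (d : ℕ) (η : ℝ) (hη : 0 < η) (g : EuclideanSpace ℝ (Fin d)) (hg : g ≠ 0) :
    let ψ : EuclideanSpace ℝ (Fin d) → ℝ := fun w => (‖w‖ + 1) * Real.log (‖w‖ + 1) - ‖w‖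
    let f : EuclideanSpace ℝ (Fin d) → ℝ := fun w => ψ w / η + ⟪g, w⟫
    let wstar : EuclideanSpace ℝ (Fin d) := (-(Real.exp (η * ‖g‖) - 1) / ‖g‖) • g
    (∀ w, f wstar ≤ f w) ∧ (∀ w, (∀ w', f w ≤ f w') → w = wstar) := by
  intro ψ f wstar
  have hmin : ∀ w, f wstar ≤ f w := fun w =>
    le_of_mul_le_mul_left ((mul_ftrlObjective_ftrlMinimizer hη hg).trans_le
      (one_add_sub_exp_le_mul_ftrlObjective hη g w)) hη
  refine ⟨hmin, fun w hw => eq_ftrlMinimizer_of_mul_ftrlObjective_le hη hg ?_⟩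
  exact (mul_le_mul_of_nonneg_left (hw wstar) hη.le).trans
    (mul_ftrlObjective_ftrlMinimizer hη hg).le
end

section
/- (Step-size difference bound, opposing case) In the one-dimensional setting with g_t and g_{1:t−1} of opposite signs and |g_t| ≤ L, p > 0, and M_t, η_t defined as in the rescaledexp algorithm (so that M_{t−1} + ∑_{s<t} g_s² ≥ |g_{1:t−1}|/p), one has |η_{t−1}·|g_{1:t−1}| − η_t·|g_{1:t}|| ≤ (1 + pL/2)·η_t·|g_t|. -/
/-!
Write S = g_{1:t-1}, G = g_t, X = M_{t-1} + ∑_{s<t} g_s² and D = M_t + ∑_{s≤t} g_s², so that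
η_{t-1}, η_t are (k√2)⁻¹ times 1/√X, 1/√D, the recursion for M gives D = max (X + G²) (|S+G|/p),
and |S| ≤ pX. Since η_t ≤ η_{t-1}, the step η_t|S+G| − η_{t-1}|S| is at most η_t|G|. For the
other sign: if D = X + G², then √D ≤ √X + G²/(2√X) bounds |S|(η_{t-1} − η_t) by (p G²/2) η_t,
and |S| − |S+G| ≤ |G|. Otherwise |S+G| > |S|, which for opposite signs forces |S+G| ≤ |G|;
then S² D ≤ G² X, i.e. η_{t-1}|S| ≤ η_t|G|.
-/

open Finset

lemma Real.sqrt_add_le_sqrt_add_div {x y : ℝ} (hx : 0 < x) (hy : 0 ≤ y) :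
    √(x + y) ≤ √x + y / (2 * √x) := by
  have hsx : 0 < √x := Real.sqrt_pos.mpr hx
  refine Real.sqrt_le_iff.mpr ⟨by positivity, ?_⟩
  have hsq : (√x + y / (2 * √x)) ^ 2 = x + y + (y / (2 * √x)) ^ 2 := by
    field_simp
    rw [Real.sq_sqrt hx.le]
    ring
  nlinarith [sq_nonneg (y / (2 * √x))]

lemma Real.inv_sqrt_sub_inv_sqrt_add_le {x y : ℝ} (hx : 0 < x) (hy : 0 ≤ y) :
    (√x)⁻¹ - (√(x + y))⁻¹ ≤ y / (2 * x) * (√(x + y))⁻¹ := by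
  have ha : 0 < √x := Real.sqrt_pos.mpr hx
  have hb : 0 < √(x + y) := Real.sqrt_pos.mpr (by positivity)
  calc (√x)⁻¹ - (√(x + y))⁻¹ = (√(x + y) - √x) / (√x * √(x + y)) := by
        field_simp
    _ ≤ y / (2 * √x) / (√x * √(x + y)) := by
        gcongr
        linarith [Real.sqrt_add_le_sqrt_add_div hx hy]
    _ = y / (2 * x) * (√(x + y))⁻¹ := by
        field_simp
        rw [Real.sq_sqrt hx.le]

lemma abs_add_le_max_of_mul_nonpos {a b : ℝ} (h : a * b ≤ 0) : |a + b| ≤ max |a| |b| := by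
  rcases mul_nonpos_iff.mp h with ⟨ha, hb⟩ | ⟨ha, hb⟩
  · exact max_comm |b| |a| ▸ abs_le_max_abs_abs (by linarith) (by linarith)
  · exact abs_le_max_abs_abs (by linarith) (by linarith)

section StepSize

variable {S G X p : ℝ}

lemma pos_of_abs_div_le (hp : 0 < p) (hX : |S| / p ≤ X) (hS : S ≠ 0) : 0 < X :=
  (div_pos (abs_pos.mpr hS) hp).trans_le hX

lemma inv_sqrt_mul_abs_sub_le_of_le_add_sq (hp : 0 < p) (hX : |S| / p ≤ X) :
    (√X)⁻¹ * |S| - (√(X + G ^ 2))⁻¹ * |S + G| ≤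
      (1 + p * |G| / 2) * ((√(X + G ^ 2))⁻¹ * |G|) := by
  set b := (√(X + G ^ 2))⁻¹
  have hb : 0 ≤ b := by positivity
  have hshrink : |S| * ((√X)⁻¹ - b) ≤ p / 2 * G ^ 2 * b := by
    rcases eq_or_ne S 0 with rfl | hS
    · simp only [abs_zero, zero_mul]
      positivity
    have hXpos := pos_of_abs_div_le hp hX hS
    calc |S| * ((√X)⁻¹ - b) ≤ |S| * (G ^ 2 / (2 * X) * b) :=
          mul_le_mul_of_nonneg_left (Real.inv_sqrt_sub_inv_sqrt_add_le hXpos (sq_nonneg G))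
            (abs_nonneg S)
      _ ≤ p * X * (G ^ 2 / (2 * X) * b) := by
          gcongr
          rwa [div_le_iff₀' hp] at hX
      _ = p / 2 * G ^ 2 * b := by field_simp
  have htri : |S| - |S + G| ≤ |G| := by
    simpa using abs_sub_abs_le_abs_sub S (S + G)
  calc (√X)⁻¹ * |S| - b * |S + G| = |S| * ((√X)⁻¹ - b) + b * (|S| - |S + G|) := by ring
    _ ≤ p / 2 * G ^ 2 * b + b * |G| := add_le_add hshrink (mul_le_mul_of_nonneg_left htri hb)
    _ = (1 + p * |G| / 2) * (b * |G|) := by rw [← sq_abs G]; ring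

lemma inv_sqrt_mul_abs_le_of_mul_nonpos (hp : 0 < p) (hopp : G * S ≤ 0) (hX : |S| / p ≤ X)
    (hgrow : X + G ^ 2 < |S + G| / p) :
    (√X)⁻¹ * |S| ≤ (√(|S + G| / p))⁻¹ * |G| := by
  rcases eq_or_ne S 0 with rfl | hS
  · simp only [abs_zero, mul_zero]
    positivity
  have hXpos := pos_of_abs_div_le hp hX hS
  have hSlt : |S| < |S + G| :=
    (div_lt_div_iff_of_pos_right hp).mp (hX.trans_lt (by nlinarith [sq_nonneg G]))
  have hSGle : |S + G| ≤ |G| :=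
    (le_max_iff.mp (abs_add_le_max_of_mul_nonpos (by linarith))).resolve_left hSlt.not_ge
  have hsq : S ^ 2 * (|S + G| / p) ≤ G ^ 2 * X := by
    have hcubic : S ^ 2 * |S + G| ≤ G ^ 2 * |S| := by
      rw [← sq_abs S, ← sq_abs G]
      calc |S| ^ 2 * |S + G| = |S| * (|S| * |S + G|) := by ring
        _ ≤ |S| * (|G| * |G|) := mul_le_mul_of_nonneg_left
            (mul_le_mul (hSlt.le.trans hSGle) hSGle (abs_nonneg _) (abs_nonneg _)) (abs_nonneg S)
        _ = |G| ^ 2 * |S| := by ring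
    calc S ^ 2 * (|S + G| / p) ≤ G ^ 2 * |S| / p := by
          rw [← mul_div_assoc]
          gcongr
      _ ≤ G ^ 2 * X := by
          rw [mul_div_assoc]
          gcongr
  have hD : 0 < |S + G| / p := div_pos ((abs_nonneg S).trans_lt hSlt) hp
  rw [← div_eq_inv_mul, ← div_eq_inv_mul, div_le_div_iff₀ (Real.sqrt_pos.mpr hXpos)
    (Real.sqrt_pos.mpr hD)]
  calc |S| * √(|S + G| / p) = √(S ^ 2 * (|S + G| / p)) := by
        rw [Real.sqrt_mul' _ hD.le, Real.sqrt_sq_eq_abs]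
    _ ≤ √(G ^ 2 * X) := Real.sqrt_le_sqrt hsq
    _ = |G| * √X := by rw [Real.sqrt_mul' _ hXpos.le, Real.sqrt_sq_eq_abs]

lemma inv_sqrt_mul_abs_add_sub_le {D : ℝ} (hp : 0 < p) (hX : |S| / p ≤ X) (hXD : X ≤ D) :
    (√D)⁻¹ * |S + G| - (√X)⁻¹ * |S| ≤ (1 + p * |G| / 2) * ((√D)⁻¹ * |G|) := by
  have hanti : (√D)⁻¹ * |S| ≤ (√X)⁻¹ * |S| := by
    rcases eq_or_ne S 0 with rfl | hS
    · simp
    refine mul_le_mul_of_nonneg_right (inv_anti₀ ?_ (Real.sqrt_le_sqrt hXD)) (abs_nonneg S)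
    exact Real.sqrt_pos.mpr (pos_of_abs_div_le hp hX hS)
  calc (√D)⁻¹ * |S + G| - (√X)⁻¹ * |S| ≤ (√D)⁻¹ * (|S| + |G|) - (√D)⁻¹ * |S| := by
        gcongr
        exact abs_add_le S G
    _ = (√D)⁻¹ * |G| := by ring
    _ ≤ (1 + p * |G| / 2) * ((√D)⁻¹ * |G|) :=
        le_mul_of_one_le_left (by positivity) (by linarith [show 0 ≤ p * |G| / 2 by positivity])

theorem abs_inv_sqrt_mul_sub_le_of_mul_nonpos {D : ℝ} (hp : 0 < p) (hopp : G * S ≤ 0)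
    (hX : |S| / p ≤ X) (hD : D = max (X + G ^ 2) (|S + G| / p)) :
    abs ((√X)⁻¹ * |S| - (√D)⁻¹ * |S + G|) ≤ (1 + p * |G| / 2) * ((√D)⁻¹ * |G|) := by
  rw [abs_sub_le_iff]
  refine ⟨?_, inv_sqrt_mul_abs_add_sub_le hp hX (hD ▸ le_max_of_le_left (by nlinarith))⟩
  rcases le_or_gt (|S + G| / p) (X + G ^ 2) with hsmall | hgrow
  · rw [hD, max_eq_left hsmall]
    exact inv_sqrt_mul_abs_sub_le_of_le_add_sq hp hX
  · rw [hD, max_eq_right hgrow.le]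
    have hB : 0 ≤ (√(|S + G| / p))⁻¹ * |S + G| := by positivity
    have hC : 0 ≤ p * |G| / 2 * ((√(|S + G| / p))⁻¹ * |G|) := by positivity
    linarith [inv_sqrt_mul_abs_le_of_mul_nonpos hp hopp hX hgrow]

end StepSize

lemma abs_sum_div_le_of_eq_max {g M : ℕ → ℝ} {p : ℝ} (hM0 : M 0 = 0)
    (hM : ∀ s, 1 ≤ s → M s = max (M (s - 1))
      (|(∑ r ∈ Icc 1 s, g r)| / p - ∑ r ∈ Icc 1 s, g r ^ 2)) (s : ℕ) :
    |(∑ r ∈ Icc 1 s, g r)| / p ≤ M s + ∑ r ∈ Icc 1 s, g r ^ 2 := by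
  rcases Nat.eq_zero_or_pos s with rfl | hs
  · simp [hM0]
  · linarith [hM s hs ▸ le_max_right (M (s - 1)) _]

/-- Step-size difference bound, opposing case (one dimension). -/
theorem stmt10 (g : ℕ → ℝ) (p k L : ℝ) (hp : 0 < p) (hk : 0 < k) (t : ℕ) (ht : 1 ≤ t)
    (M η : ℕ → ℝ) (hM0 : M 0 = 0)
    (hM : ∀ s, 1 ≤ s → M s = max (M (s - 1))
      (|(∑ r ∈ Icc 1 s, g r)| / p - ∑ r ∈ Icc 1 s, g r ^ 2))
    (hη : ∀ s, η s = 1 / (k * Real.sqrt 2 * Real.sqrt (M s + ∑ r ∈ Icc 1 s, g r ^ 2)))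
    (hopp : g t * ∑ r ∈ Icc 1 (t - 1), g r ≤ 0) (hgt : |g t| ≤ L) :
    abs (η (t - 1) * |(∑ r ∈ Icc 1 (t - 1), g r)| - η t * |(∑ r ∈ Icc 1 t, g r)|) ≤
      (1 + p * L / 2) * (η t * |g t|) := by
  obtain ⟨n, rfl⟩ := Nat.exists_eq_add_of_le' ht
  rw [Nat.add_sub_cancel] at hopp ⊢
  have hsum : ∑ r ∈ Icc 1 (n + 1), g r = ∑ r ∈ Icc 1 n, g r + g (n + 1) :=
    sum_Icc_succ_top (by omega) g
  have hD : M (n + 1) + ∑ r ∈ Icc 1 (n + 1), g r ^ 2 =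
      max (M n + ∑ r ∈ Icc 1 n, g r ^ 2 + g (n + 1) ^ 2)
        (|∑ r ∈ Icc 1 n, g r + g (n + 1)| / p) := by
    rw [hM (n + 1) (by omega), Nat.add_sub_cancel, ← hsum, ← max_add_add_right,
      sum_Icc_succ_top (by omega) (fun r => g r ^ 2)]
    congr 1 <;> ring
  have hcore := abs_inv_sqrt_mul_sub_le_of_mul_nonpos hp hopp
    (abs_sum_div_le_of_eq_max hM0 hM n) hD
  have hc : 0 < (k * √2)⁻¹ := by positivity
  have hscale : ∀ s, η s = (k * √2)⁻¹ * (√(M s + ∑ r ∈ Icc 1 s, g r ^ 2))⁻¹ := fun s => by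
    rw [hη, one_div, mul_inv]
  rw [hscale, hscale, hsum, mul_assoc, mul_assoc, mul_assoc, ← mul_sub, abs_mul,
    abs_of_pos hc, mul_left_comm]
  gcongr
  exact hcore.trans (by gcongr)
end

section
/- (Iterate size implies gradient-sum size) Let the FTRL iterate be w_T = −(g_{1:T−1}/‖g_{1:T−1}‖)·(exp(η_{T−1}‖g_{1:T−1}‖) − 1) with η_{T−1} = 1/(k√2·√(M_{T−1} + ‖g‖²_{1:T−1})) and M_{T−1} + ‖g‖²_{1:T−1} ≥ ‖g_{1:T−1}‖/p. If ‖w_T‖ ≥ exp(√(pB)/(k√2)) − 1 for some B ≥ 0, then ‖g_{1:T−1}‖ ≥ B. -/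
/-- Iterate size implies gradient-sum size (Lemma 5). -/
theorem stmt11 (d : ℕ) (G : EuclideanSpace ℝ (Fin d)) (hG : G ≠ 0)
    (p k B S η : ℝ) (hp : 0 < p) (hk : 0 < k) (hB : 0 ≤ B)
    (hS : ‖G‖ / p ≤ S)
    (hη : η = 1 / (k * Real.sqrt 2 * Real.sqrt S))
    (w : EuclideanSpace ℝ (Fin d))
    (hw : w = (-(Real.exp (η * ‖G‖) - 1) / ‖G‖) • G)
    (hwge : Real.exp (Real.sqrt (p * B) / (k * Real.sqrt 2)) - 1 ≤ ‖w‖) :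
    B ≤ ‖G‖ := by
  have hGpos : (0:ℝ) < ‖G‖ := norm_pos_iff.mpr hG
  have hSpos : 0 < S := lt_of_lt_of_le (div_pos hGpos hp) hS
  have hsS : 0 < Real.sqrt S := Real.sqrt_pos.mpr hSpos
  have hs2 : 0 < Real.sqrt 2 := Real.sqrt_pos.mpr (by norm_num)
  have hηpos : 0 < η := by
    rw [hη]; positivity
  have hηG : 0 ≤ η * ‖G‖ := le_of_lt (mul_pos hηpos hGpos)
  have hexp1 : (1:ℝ) ≤ Real.exp (η * ‖G‖) := Real.one_le_exp hηG
  have hnw : ‖w‖ = Real.exp (η * ‖G‖) - 1 := by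
    rw [hw, norm_smul, Real.norm_eq_abs, abs_div, abs_neg,
      abs_of_nonneg (by linarith), abs_of_pos hGpos,
      div_mul_cancel₀ _ (ne_of_gt hGpos)]
  rw [hnw] at hwge
  have hle : Real.sqrt (p * B) / (k * Real.sqrt 2) ≤ η * ‖G‖ := by
    have := Real.exp_le_exp.mp (by linarith : Real.exp (Real.sqrt (p * B) / (k * Real.sqrt 2)) ≤ Real.exp (η * ‖G‖))
    exact this
  have hηval : η * ‖G‖ = ‖G‖ / (k * Real.sqrt 2 * Real.sqrt S) := by
    rw [hη]; ring
  -- ‖G‖ / √S ≤ √(p‖G‖)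
  have hkey : ‖G‖ / Real.sqrt S ≤ Real.sqrt (p * ‖G‖) := by
    have hGp : Real.sqrt (‖G‖ / p) ≤ Real.sqrt S := Real.sqrt_le_sqrt hS
    have hGp0 : 0 < Real.sqrt (‖G‖ / p) := Real.sqrt_pos.mpr (div_pos hGpos hp)
    rw [div_le_iff₀ hsS]
    calc ‖G‖ = Real.sqrt (p * ‖G‖) * Real.sqrt (‖G‖ / p) := by
          rw [← Real.sqrt_mul (by positivity)]
          rw [show p * ‖G‖ * (‖G‖ / p) = ‖G‖ ^ 2 by field_simp]
          exact (Real.sqrt_sq hGpos.le).symm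
      _ ≤ Real.sqrt (p * ‖G‖) * Real.sqrt S := by
          exact mul_le_mul_of_nonneg_left hGp (Real.sqrt_nonneg _)
  have h2 : Real.sqrt (p * B) ≤ Real.sqrt (p * ‖G‖) := by
    calc Real.sqrt (p * B) ≤ η * ‖G‖ * (k * Real.sqrt 2) := by
          rwa [div_le_iff₀ (by positivity)] at hle
      _ = ‖G‖ / Real.sqrt S := by
          rw [hηval]; field_simp
      _ ≤ Real.sqrt (p * ‖G‖) := hkey
  have h3 : p * B ≤ p * ‖G‖ := by
    nlinarith [Real.sq_sqrt (by positivity : (0:ℝ) ≤ p * B),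
      Real.sq_sqrt (by positivity : (0:ℝ) ≤ p * ‖G‖), Real.sqrt_nonneg (p * B)]
  exact le_of_mul_le_mul_left h3 hp
end

section
/- (Iterate stability bound) In the one-dimensional setting with sign(g_{1:t}) = sign(g_{1:t−1}), |g_t| ≤ L, and w_s = −sign(g_{1:s−1})(exp(η_{s−1}|g_{1:s−1}|) − 1), if |η_{t−1}|g_{1:t−1}| − η_t|g_{1:t}|| ≤ (1 + pL/2)·η_t|g_t| then |w_t − w_{t+1}| ≤ |g_t|·η_t·(|w_{t+1}| + 1)·(1 + pL/2)·exp(η_t·|g_t|·(1 + pL/2)). -/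
lemma aux13 (K x : ℝ) (hK : 0 ≤ K) (hx : |x| ≤ K) :
    |Real.exp x - 1| ≤ K * Real.exp K := by
  rw [abs_le] at hx
  have h1 : Real.exp x - 1 ≤ K * Real.exp K := by
    have h2 := Real.exp_le_exp.mpr hx.2
    have h3 : Real.exp (-K) * Real.exp K = 1 := by
      rw [← Real.exp_add]; simp
    nlinarith [Real.exp_pos K, Real.add_one_le_exp (-K), h3, Real.exp_pos (-K)]
  have h2 : -(K * Real.exp K) ≤ Real.exp x - 1 := by
    nlinarith [Real.add_one_le_exp x, Real.one_le_exp hK]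
  exact abs_le.mpr ⟨h2, h1⟩

/-- Iterate stability bound (Lemma 7), one dimension. -/
theorem stmt13 (G1 gt p L a b : ℝ) (ha : 0 ≤ a) (hb : 0 ≤ b) (hp : 0 ≤ p) (hL : 0 ≤ L)
    (hgt : |gt| ≤ L)
    (hsign : Real.sign (G1 + gt) = Real.sign G1)
    (hdiff : abs (a * |G1| - b * |G1 + gt|) ≤ (1 + p * L / 2) * (b * |gt|))
    (wt wt1 : ℝ)
    (hwt : wt = -Real.sign G1 * (Real.exp (a * |G1|) - 1))
    (hwt1 : wt1 = -Real.sign (G1 + gt) * (Real.exp (b * |G1 + gt|) - 1)) :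
    |wt - wt1| ≤
      |gt| * b * (|wt1| + 1) * (1 + p * L / 2) * Real.exp (b * |gt| * (1 + p * L / 2)) := by
  by_cases hG : G1 = 0
  · have h0 : Real.sign (G1 + gt) = 0 := by rw [hsign, hG, Real.sign_zero]
    have e1 : wt = 0 := by simp [hwt, hG]
    have e2 : wt1 = 0 := by simp [hwt1, h0]
    rw [e1, e2, sub_zero, abs_zero]
    positivity
  · have hs : |Real.sign G1| = 1 := by
      rcases lt_trichotomy G1 0 with h | h | h
      · rw [Real.sign_of_neg h]; norm_num
      · exact absurd h hG
      · rw [Real.sign_of_pos h]; norm_num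
    have hB : (0:ℝ) ≤ b * |G1 + gt| := by positivity
    have hK : (0:ℝ) ≤ (1 + p * L / 2) * (b * |gt|) := by positivity
    have key := aux13 _ (a * |G1| - b * |G1 + gt|) hK hdiff
    have hw1 : |wt1| + 1 = Real.exp (b * |G1 + gt|) := by
      rw [hwt1, hsign, abs_mul, abs_neg, hs, one_mul,
        abs_of_nonneg (by linarith [Real.one_le_exp hB])]
      ring
    have habs : |wt - wt1| =
        Real.exp (b * |G1 + gt|) * |Real.exp (a * |G1| - b * |G1 + gt|) - 1| := by
      rw [hwt, hwt1, hsign]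
      have hEE : Real.exp (a * |G1|) =
          Real.exp (b * |G1 + gt|) * Real.exp (a * |G1| - b * |G1 + gt|) := by
        rw [← Real.exp_add]; ring_nf
      have : -Real.sign G1 * (Real.exp (a * |G1|) - 1) -
          -Real.sign G1 * (Real.exp (b * |G1 + gt|) - 1) =
          -Real.sign G1 * (Real.exp (b * |G1 + gt|) *
            (Real.exp (a * |G1| - b * |G1 + gt|) - 1)) := by
        rw [hEE]; ring
      rw [this, abs_mul, abs_neg, hs, one_mul, abs_mul,
        abs_of_pos (Real.exp_pos _)]
    rw [habs, hw1]
    calc Real.exp (b * |G1 + gt|) * |Real.exp (a * |G1| - b * |G1 + gt|) - 1|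
        ≤ Real.exp (b * |G1 + gt|) *
          ((1 + p * L / 2) * (b * |gt|) * Real.exp ((1 + p * L / 2) * (b * |gt|))) :=
          mul_le_mul_of_nonneg_left key (le_of_lt (Real.exp_pos _))
      _ = |gt| * b * Real.exp (b * |G1 + gt|) * (1 + p * L / 2) *
          Real.exp (b * |gt| * (1 + p * L / 2)) := by ring_nf
end

section
/- (Bounded-iterate per-round regret, Lemma 9) In the one-dimensional rescaledexp setting with k = √2, p ≤ 2/L, |g_t| ≤ L, and |w_t| ≤ D, the per-round terms satisfy g_t·(w_t − w_{t+1}) ≤ 6·max(D + 1, e^{1/2})·g_t²·η_t, where w_s = −sign(g_{1:s−1})(exp(η_{s−1}|g_{1:s−1}|) − 1) and η_t|g_t| ≤ 1/2. -/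
/-!
With `φ u = sign u · (exp |u| - 1)` (`signedExpm1`) we have `w_s = -φ(η_{s-1} g_{1:s-1})`.
Since `φ' = exp |·|`, the increment `|w_t - w_{t+1}|` is at most
`|η_t g_{1:t} - η_{t-1} g_{1:t-1}|` times the exponential of the larger of the two arguments.
The potential `M_s + ∑ g_r²` keeps the step size comparable across one round: because
`|g_{1:t-1}| ≤ p (M_{t-1} + ∑ g_r²)` and the potential grows by at most `2|g_t| / p`, the step
sizes drift by `|g_{1:t-1}| · |η_t - η_{t-1}| ≤ η_t |g_t|`, so the argument moves by at most
`2 η_t |g_t| ≤ 1`. Hence the exponential factor is at most `e · exp (η_{t-1}|g_{1:t-1}|)`,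
which is `≤ 3 (D + 1)` by `|w_t| ≤ D`.
-/

open Finset Real

theorem exp_sub_exp_le_sub_mul_exp (u v : ℝ) : exp v - exp u ≤ (v - u) * exp v := by
  have h := mul_le_mul_of_nonneg_right (one_sub_le_exp_neg (v - u)) (exp_pos v).le
  rw [← exp_add, neg_sub, sub_add_cancel] at h
  linarith

noncomputable def signedExpm1 (u : ℝ) : ℝ := Real.sign u * (exp |u| - 1)

theorem signedExpm1_of_nonneg {u : ℝ} (hu : 0 ≤ u) : signedExpm1 u = exp u - 1 := by
  rcases hu.eq_or_lt with rfl | hu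
  · simp [signedExpm1]
  · rw [signedExpm1, Real.sign_of_pos hu, abs_of_pos hu, one_mul]

theorem signedExpm1_neg (u : ℝ) : signedExpm1 (-u) = -signedExpm1 u := by
  rw [signedExpm1, signedExpm1, Real.sign_neg, abs_neg, neg_mul]

theorem abs_signedExpm1 (u : ℝ) : |signedExpm1 u| = exp |u| - 1 := by
  rcases le_total 0 u with hu | hu
  · rw [signedExpm1_of_nonneg hu, abs_of_nonneg hu, abs_of_nonneg (by simpa using hu)]
  · rw [← abs_neg, ← signedExpm1_neg, signedExpm1_of_nonneg (neg_nonneg.2 hu), abs_of_nonpos hu,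
      abs_of_nonneg (by simpa using hu)]

theorem signedExpm1_mul_of_nonneg {c : ℝ} (hc : 0 ≤ c) (x : ℝ) :
    signedExpm1 (c * x) = Real.sign x * (exp (c * |x|) - 1) := by
  rcases hc.eq_or_lt with rfl | hc
  · simp [signedExpm1]
  have hsign : Real.sign (c * x) = Real.sign x := by
    rcases lt_trichotomy x 0 with hx | rfl | hx
    · rw [Real.sign_of_neg hx, Real.sign_of_neg (mul_neg_of_pos_of_neg hc hx)]
    · simp
    · rw [Real.sign_of_pos hx, Real.sign_of_pos (mul_pos hc hx)]
  rw [signedExpm1, hsign, abs_mul, abs_of_pos hc]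

theorem abs_signedExpm1_sub_le_of_nonneg {a b : ℝ} (ha : 0 ≤ a) (hab : a ≤ b) :
    |signedExpm1 b - signedExpm1 a| ≤ (b - a) * exp b := by
  rw [signedExpm1_of_nonneg (ha.trans hab), signedExpm1_of_nonneg ha, sub_sub_sub_cancel_right,
    abs_of_nonneg (sub_nonneg.2 (exp_le_exp.2 hab))]
  exact exp_sub_exp_le_sub_mul_exp a b

theorem abs_signedExpm1_sub_le (a b : ℝ) :
    |signedExpm1 b - signedExpm1 a| ≤ |b - a| * exp (max |a| |b|) := by
  wlog hab : a ≤ b generalizing a b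
  · rw [abs_sub_comm, abs_sub_comm b, max_comm]
    exact this b a (le_of_not_ge hab)
  rw [abs_of_nonneg (sub_nonneg.2 hab)]
  rcases le_total 0 a with ha | ha
  · rw [abs_of_nonneg ha, abs_of_nonneg (ha.trans hab), max_eq_right hab]
    exact abs_signedExpm1_sub_le_of_nonneg ha hab
  rcases le_total b 0 with hb | hb
  · have h := abs_signedExpm1_sub_le_of_nonneg (neg_nonneg.2 hb) (neg_le_neg hab)
    rw [signedExpm1_neg, signedExpm1_neg, neg_sub_neg, neg_sub_neg] at h
    rwa [abs_of_nonpos ha, abs_of_nonpos hb, max_eq_left (neg_le_neg hab)]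
  · -- `a ≤ 0 ≤ b`: bound each endpoint against `signedExpm1 0 = 0`
    have hb' := exp_sub_exp_le_sub_mul_exp 0 |b|
    have ha' := exp_sub_exp_le_sub_mul_exp 0 |a|
    have hexpa : exp |a| ≤ exp (max |a| |b|) := exp_le_exp.2 (le_max_left _ _)
    have hexpb : exp |b| ≤ exp (max |a| |b|) := exp_le_exp.2 (le_max_right _ _)
    rw [exp_zero, sub_zero] at ha' hb'
    calc |signedExpm1 b - signedExpm1 a| ≤ |signedExpm1 b| + |signedExpm1 a| := abs_sub _ _
      _ ≤ |b| * exp |b| + |a| * exp |a| := by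
        rw [abs_signedExpm1, abs_signedExpm1]; linarith
      _ ≤ |b| * exp (max |a| |b|) + |a| * exp (max |a| |b|) := by gcongr
      _ = (b - a) * exp (max |a| |b|) := by rw [abs_of_nonneg hb, abs_of_nonpos ha]; ring

theorem abs_signedExpm1_sub_le_of_abs_sub_le {a b q K : ℝ} (hba : |b - a| ≤ 2 * q)
    (hq : q ≤ 1 / 2) (hK : exp |a| ≤ K) : |signedExpm1 b - signedExpm1 a| ≤ 6 * q * K := by
  have hb : |b| ≤ |a| + 2 * q := by linarith [abs_sub_abs_le_abs_sub b a]
  have he : exp (2 * q) ≤ 3 :=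
    (exp_le_exp.2 (by linarith)).trans (exp_one_lt_d9.trans (by norm_num)).le
  have hmax : exp (max |a| |b|) ≤ 3 * K :=
    calc exp (max |a| |b|) ≤ exp (|a| + 2 * q) :=
          exp_le_exp.2 (max_le (by linarith [abs_nonneg (b - a)]) hb)
      _ = exp |a| * exp (2 * q) := exp_add _ _
      _ ≤ K * 3 := mul_le_mul hK he (exp_pos _).le ((exp_pos _).le.trans hK)
      _ = 3 * K := mul_comm _ _
  calc |signedExpm1 b - signedExpm1 a| ≤ |b - a| * exp (max |a| |b|) := abs_signedExpm1_sub_le a b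
    _ ≤ 2 * q * (3 * K) := mul_le_mul hba hmax (exp_pos _).le (by linarith [abs_nonneg (b - a)])
    _ = 6 * q * K := by ring

theorem mul_abs_inv_sub_inv_le {a c p s₀ s₁ : ℝ} (hs₀ : 0 ≤ s₀) (hs : s₀ ≤ s₁) (ha : 0 ≤ a)
    (hc : 0 ≤ c) (hap : a ≤ p * s₀ ^ 2) (hps : p * s₁ ^ 2 ≤ p * s₀ ^ 2 + 2 * c) :
    a * |s₁⁻¹ - s₀⁻¹| ≤ c * s₁⁻¹ := by
  rcases hs₀.eq_or_lt with rfl | hs₀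
  · have : a = 0 := le_antisymm (by simpa using hap) ha
    rw [this, zero_mul]
    positivity
  have hs₁ : 0 < s₁ := hs₀.trans_le hs
  have key : a * (s₁ - s₀) ≤ c * s₀ := by
    -- `a (s₁ - s₀) (s₁ + s₀) = a (s₁² - s₀²) ≤ p s₀² (s₁² - s₀²) ≤ 2 c s₀²`
    have h1 : a * (s₁ ^ 2 - s₀ ^ 2) ≤ p * s₀ ^ 2 * (s₁ ^ 2 - s₀ ^ 2) :=
      mul_le_mul_of_nonneg_right hap (by nlinarith)
    have h2 : s₀ ^ 2 * (p * s₁ ^ 2) ≤ s₀ ^ 2 * (p * s₀ ^ 2 + 2 * c) :=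
      mul_le_mul_of_nonneg_left hps (sq_nonneg _)
    nlinarith [mul_nonneg ha (sub_nonneg.2 hs)]
  rw [abs_of_nonpos (sub_nonpos.2 (inv_anti₀ hs₀ hs)), neg_sub, inv_sub_inv hs₀.ne' hs₁.ne',
    mul_div_assoc', div_le_iff₀ (mul_pos hs₀ hs₁)]
  calc a * (s₁ - s₀) ≤ c * s₀ := key
    _ = c * s₁⁻¹ * (s₀ * s₁) := by field_simp

theorem monotone_of_succ_eq_max {α : Type*} [LinearOrder α] {M f : ℕ → α}
    (hM : ∀ s, M (s + 1) = max (M s) (f s)) : Monotone M :=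
  monotone_nat_of_le_succ fun s => (le_max_left _ _).trans (hM s).ge

section RescaledExp

variable {g M η : ℕ → ℝ} {p : ℝ}

theorem abs_sum_le_mul_potential (hp : 0 < p) (hM0 : M 0 = 0)
    (hM : ∀ s, M (s + 1) = max (M s)
      (|∑ r ∈ Icc 1 (s + 1), g r| / p - ∑ r ∈ Icc 1 (s + 1), g r ^ 2)) (s : ℕ) :
    |∑ r ∈ Icc 1 s, g r| ≤ p * (M s + ∑ r ∈ Icc 1 s, g r ^ 2) := by
  cases s with
  | zero => simp [hM0]
  | succ s =>
    have h := (le_max_right _ _).trans (hM s).ge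
    rw [← div_le_iff₀' hp]
    linarith

theorem mul_potential_succ_le (hp : 0 < p) (hM0 : M 0 = 0)
    (hM : ∀ s, M (s + 1) = max (M s)
      (|∑ r ∈ Icc 1 (s + 1), g r| / p - ∑ r ∈ Icc 1 (s + 1), g r ^ 2))
    (s : ℕ) (hg : p * |g (s + 1)| ≤ 2) :
    p * (M (s + 1) + ∑ r ∈ Icc 1 (s + 1), g r ^ 2) ≤
      p * (M s + ∑ r ∈ Icc 1 s, g r ^ 2) + 2 * |g (s + 1)| := by
  have hA := abs_sum_le_mul_potential hp hM0 hM s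
  rw [hM s]
  rcases max_cases (M s) (|∑ r ∈ Icc 1 (s + 1), g r| / p - ∑ r ∈ Icc 1 (s + 1), g r ^ 2)
    with ⟨h, -⟩ | ⟨h, -⟩ <;> rw [h]
  · have hg2 : p * g (s + 1) ^ 2 ≤ 2 * |g (s + 1)| := by
      rw [← sq_abs, sq, ← mul_assoc]
      exact mul_le_mul_of_nonneg_right hg (abs_nonneg _)
    rw [sum_Icc_succ_top (by omega)]
    linarith
  · rw [sub_add_cancel, mul_div_cancel₀ _ hp.ne', sum_Icc_succ_top (by omega)]
    linarith [abs_add_le (∑ r ∈ Icc 1 s, g r) (g (s + 1)), abs_nonneg (g (s + 1))]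

theorem potential_le_succ
    (hM : ∀ s, M (s + 1) = max (M s)
      (|∑ r ∈ Icc 1 (s + 1), g r| / p - ∑ r ∈ Icc 1 (s + 1), g r ^ 2)) (s : ℕ) :
    M s + ∑ r ∈ Icc 1 s, g r ^ 2 ≤ M (s + 1) + ∑ r ∈ Icc 1 (s + 1), g r ^ 2 := by
  rw [sum_Icc_succ_top (by omega)]
  linarith [monotone_of_succ_eq_max hM s.le_succ, sq_nonneg (g (s + 1))]

/-- The signed form of `|η_{s-1} |g_{1:s-1}| - η_s |g_{1:s}|| ≤ 2 η_s |g_s|`. -/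
theorem abs_stepsize_mul_sum_sub_le (hp : 0 < p) (hM0 : M 0 = 0)
    (hM : ∀ s, M (s + 1) = max (M s)
      (|∑ r ∈ Icc 1 (s + 1), g r| / p - ∑ r ∈ Icc 1 (s + 1), g r ^ 2))
    (hη : ∀ s, η s = 1 / (2 * √(M s + ∑ r ∈ Icc 1 s, g r ^ 2)))
    (s : ℕ) (hg : p * |g (s + 1)| ≤ 2) :
    |η (s + 1) * ∑ r ∈ Icc 1 (s + 1), g r - η s * ∑ r ∈ Icc 1 s, g r| ≤
      2 * (η (s + 1) * |g (s + 1)|) := by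
  have hS₀ : 0 ≤ M s + ∑ r ∈ Icc 1 s, g r ^ 2 :=
    add_nonneg (hM0 ▸ monotone_of_succ_eq_max hM (Nat.zero_le s))
      (sum_nonneg fun _ _ => sq_nonneg _)
  have hS := potential_le_succ hM s
  have hdrift := mul_abs_inv_sub_inv_le (sqrt_nonneg _) (sqrt_le_sqrt hS) (abs_nonneg _)
    (abs_nonneg (g (s + 1))) (by rw [sq_sqrt hS₀]; exact abs_sum_le_mul_potential hp hM0 hM s)
    (by rw [sq_sqrt hS₀, sq_sqrt (hS₀.trans hS)]; exact mul_potential_succ_le hp hM0 hM s hg)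
  rw [hη, hη, sum_Icc_succ_top (by omega) g]
  set A := ∑ r ∈ Icc 1 s, g r
  set s₀ := √(M s + ∑ r ∈ Icc 1 s, g r ^ 2)
  set s₁ := √(M (s + 1) + ∑ r ∈ Icc 1 (s + 1), g r ^ 2)
  have hs₁ : 0 ≤ s₁⁻¹ := inv_nonneg.2 (sqrt_nonneg _)
  have hsplit := abs_add_le (s₁⁻¹ * g (s + 1)) ((s₁⁻¹ - s₀⁻¹) * A)
  rw [abs_mul, abs_mul, abs_of_nonneg hs₁, mul_comm |_ - _|] at hsplit
  rw [show 1 / (2 * s₁) * (A + g (s + 1)) - 1 / (2 * s₀) * A =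
      (s₁⁻¹ * g (s + 1) + (s₁⁻¹ - s₀⁻¹) * A) / 2 by ring, abs_div, abs_two,
    show 2 * (1 / (2 * s₁) * |g (s + 1)|) = s₁⁻¹ * |g (s + 1)| by ring]
  linarith

end RescaledExp

/-- Bounded-iterate per-round regret (Lemma 9), one dimension, k = √2. -/
theorem stmt15 (g : ℕ → ℝ) (p L D : ℝ) (hp : 0 < p) (hL : 0 < L) (hpL : p ≤ 2 / L)
    (t : ℕ) (ht : 1 ≤ t)
    (M η : ℕ → ℝ) (hM0 : M 0 = 0)
    (hM : ∀ s, 1 ≤ s → M s = max (M (s - 1))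
      (|∑ r ∈ Icc 1 s, g r| / p - ∑ r ∈ Icc 1 s, g r ^ 2))
    (hη : ∀ s, η s = 1 / (2 * Real.sqrt (M s + ∑ r ∈ Icc 1 s, g r ^ 2)))
    (w : ℕ → ℝ)
    (hw : ∀ s, 1 ≤ s → w s = -Real.sign (∑ r ∈ Icc 1 (s - 1), g r) *
      (Real.exp (η (s - 1) * |∑ r ∈ Icc 1 (s - 1), g r|) - 1))
    (hgt : |g t| ≤ L) (hwt : |w t| ≤ D) (hhalf : η t * |g t| ≤ 1 / 2) :
    g t * (w t - w (t + 1)) ≤ 6 * max (D + 1) (Real.exp (1 / 2)) * g t ^ 2 * η t := by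
  obtain ⟨n, rfl⟩ : ∃ n, t = n + 1 := ⟨t - 1, by omega⟩
  have hM' : ∀ s, M (s + 1) = max (M s)
      (|∑ r ∈ Icc 1 (s + 1), g r| / p - ∑ r ∈ Icc 1 (s + 1), g r ^ 2) := fun s => by
    simpa using hM (s + 1) (by omega)
  have hpg : p * |g (n + 1)| ≤ 2 :=
    (mul_le_mul_of_nonneg_left hgt hp.le).trans ((le_div_iff₀ hL).1 hpL)
  have hw' : ∀ s, w (s + 1) = -signedExpm1 (η s * ∑ r ∈ Icc 1 s, g r) := fun s => by
    rw [signedExpm1_mul_of_nonneg (by rw [hη]; positivity), hw (s + 1) (by omega), neg_mul,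
      Nat.add_sub_cancel]
  have hK : exp |η n * ∑ r ∈ Icc 1 n, g r| ≤ max (D + 1) (exp (1 / 2)) := by
    rw [hw', abs_neg, abs_signedExpm1] at hwt
    exact le_max_of_le_left (by linarith)
  have hstep := abs_signedExpm1_sub_le_of_abs_sub_le
    (abs_stepsize_mul_sum_sub_le hp hM0 hM' hη n hpg) hhalf hK
  calc g (n + 1) * (w (n + 1) - w (n + 1 + 1))
      = g (n + 1) * (signedExpm1 (η (n + 1) * ∑ r ∈ Icc 1 (n + 1), g r) -
          signedExpm1 (η n * ∑ r ∈ Icc 1 n, g r)) := by rw [hw', hw']; ring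
    _ ≤ |g (n + 1)| * (6 * (η (n + 1) * |g (n + 1)|) * max (D + 1) (exp (1 / 2))) :=
      (le_abs_self _).trans ((abs_mul _ _).trans_le (by gcongr))
    _ = 6 * max (D + 1) (exp (1 / 2)) * g (n + 1) ^ 2 * η (n + 1) := by rw [← sq_abs (g _)]; ring
end

section
/- (Exponential iterate bound) In the rescaledexp algorithm with k = √2, the iterates satisfy ‖w_{t+1}‖ ≤ exp(√(T/2)) − 1 for all t < T within an epoch of length at most T, because η_t‖g_{1:t}‖ ≤ √(p‖g_{1:t}‖)/2 ≤ √(p·L·t)/2 ≤ √(t/2) whenever p ≤ 2/L and ‖g_s‖ ≤ L for s ≤ t. -/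
/-!
The step size is `η_t = 1 / (2 √A_t)` with `A_t = M_t + ‖g‖²_{1:t} ≥ ‖g_{1:t}‖ / p`, so
`η_t ‖g_{1:t}‖ ≤ √(p ‖g_{1:t}‖) / 2`. Since `‖g_{1:t}‖ ≤ L t` and `p L ≤ 2`, this is at most
`√(2t) / 2 = √(t / 2) ≤ √(T / 2)`, while `‖w_{t+1}‖ ≤ exp (η_t ‖g_{1:t}‖) - 1`.
-/

open Finset Real

lemma norm_div_norm_smul_le {E : Type*} [SeminormedAddCommGroup E] [NormedSpace ℝ E]
    (a : ℝ) (v : E) : ‖(a / ‖v‖) • v‖ ≤ |a| := by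
  rw [norm_smul, norm_div, norm_norm]
  rcases eq_or_ne ‖v‖ 0 with hv | hv
  · simp [hv]
  · rw [div_mul_cancel₀ _ hv, norm_eq_abs]

lemma one_div_two_sqrt_mul_le {a p A : ℝ} (ha : 0 ≤ a) (hp : 0 < p) (hA : a / p ≤ A) :
    1 / (2 * √A) * a ≤ √(p * a) / 2 := by
  rcases ha.eq_or_lt with rfl | ha
  · simp
  have hA : 0 < √A := sqrt_pos.2 ((div_pos ha hp).trans_le hA)
  have key : a ≤ √(p * a) * √A :=
    calc a = √(p * a * (a / p)) := by
            rw [show p * a * (a / p) = a * a by field_simp, sqrt_mul_self ha.le]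
      _ ≤ √(p * a * A) := sqrt_le_sqrt (by gcongr)
      _ = √(p * a) * √A := sqrt_mul (by positivity) A
  rw [one_div_mul_eq_div, div_le_iff₀ (by positivity)]
  linarith

lemma sqrt_div_two_le_sqrt_half {x t : ℝ} (h : x ≤ 2 * t) : √x / 2 ≤ √(t / 2) := by
  calc √x / 2 = √(x / 4) := by
          rw [sqrt_div' x (by norm_num : (0 : ℝ) ≤ 4), show (4 : ℝ) = 2 ^ 2 by norm_num,
            sqrt_sq (by norm_num)]
    _ ≤ √(t / 2) := sqrt_le_sqrt (by linarith)

lemma norm_sum_Icc_le {E : Type*} [SeminormedAddCommGroup E] (g : ℕ → E) {L : ℝ} {t : ℕ}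
    (hg : ∀ s, 1 ≤ s → s ≤ t → ‖g s‖ ≤ L) : ‖∑ r ∈ Icc 1 t, g r‖ ≤ t * L :=
  (norm_sum_le_of_le _ fun s hs => hg s (mem_Icc.1 hs).1 (mem_Icc.1 hs).2).trans (by simp)

lemma norm_sum_Icc_div_le {E : Type*} [SeminormedAddCommGroup E] (g : ℕ → E) (p : ℝ)
    (M : ℕ → ℝ) (hM0 : M 0 = 0)
    (hM : ∀ s, 1 ≤ s → M s = max (M (s - 1))
      (‖∑ r ∈ Icc 1 s, g r‖ / p - ∑ r ∈ Icc 1 s, ‖g r‖ ^ 2)) (t : ℕ) :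
    ‖∑ r ∈ Icc 1 t, g r‖ / p ≤ M t + ∑ r ∈ Icc 1 t, ‖g r‖ ^ 2 := by
  rcases Nat.eq_zero_or_pos t with rfl | ht
  · simp [hM0]
  · have := hM t ht ▸ le_max_right (M (t - 1)) _
    linarith

/-- Exponential iterate bound for rescaledexp with k = √2. -/
theorem stmt16 (d T : ℕ) (g : ℕ → EuclideanSpace ℝ (Fin d)) (p L : ℝ)
    (hL : 0 < L) (hp : 0 < p) (hpL : p ≤ 2 / L)
    (M η : ℕ → ℝ) (hM0 : M 0 = 0)
    (hM : ∀ s, 1 ≤ s → M s = max (M (s - 1))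
      (‖∑ r ∈ Icc 1 s, g r‖ / p - ∑ r ∈ Icc 1 s, ‖g r‖ ^ 2))
    (hη : ∀ s, η s = 1 / (2 * Real.sqrt (M s + ∑ r ∈ Icc 1 s, ‖g r‖ ^ 2)))
    (w : ℕ → EuclideanSpace ℝ (Fin d))
    (hw : ∀ s, w (s + 1) =
      (-(Real.exp (η s * ‖∑ r ∈ Icc 1 s, g r‖) - 1) / ‖∑ r ∈ Icc 1 s, g r‖) •
        ∑ r ∈ Icc 1 s, g r)
    (t : ℕ) (ht : t < T)
    (hg : ∀ s, 1 ≤ s → s ≤ t → ‖g s‖ ≤ L) :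
    ‖w (t + 1)‖ ≤ Real.exp (Real.sqrt (T / 2 : ℝ)) - 1 := by
  set G := ∑ r ∈ Icc 1 t, g r
  have hpL' : p * L ≤ 2 := (le_div_iff₀ hL).1 hpL
  have hpG : p * ‖G‖ ≤ 2 * t :=
    calc p * ‖G‖ ≤ p * (t * L) := by gcongr; exact norm_sum_Icc_le g hg
      _ = t * (p * L) := by ring
      _ ≤ 2 * t := by nlinarith [t.cast_nonneg (α := ℝ)]
  have hx0 : 0 ≤ η t * ‖G‖ := by rw [hη]; positivity
  have hx : η t * ‖G‖ ≤ √(T / 2) :=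
    calc η t * ‖G‖ ≤ √(p * ‖G‖) / 2 := by
          rw [hη]
          exact one_div_two_sqrt_mul_le (norm_nonneg G) hp (norm_sum_Icc_div_le g p M hM0 hM t)
      _ ≤ √(t / 2) := sqrt_div_two_le_sqrt_half hpG
      _ ≤ √(T / 2) := sqrt_le_sqrt (by gcongr)
  calc ‖w (t + 1)‖ ≤ |-(exp (η t * ‖G‖) - 1)| := hw t ▸ norm_div_norm_smul_le _ G
    _ = exp (η t * ‖G‖) - 1 := by rw [abs_neg, abs_of_nonneg (sub_nonneg.2 (one_le_exp hx0))]
    _ ≤ exp (√(T / 2)) - 1 := by gcongr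
end

section
/- (Lower bound, Case 1 inequality) For any c > 0 there exists T₀ such that for all T ≥ T₀ the following holds: if a learner plays w_1,…,w_T ∈ ℝ with w_t < (1/2)·exp(T^{1/2}/(4·log(2)·c)) for all t, and the losses are g_t = −1 for all t, then with u = exp(T^{1/2}/(4·log(2)·c)) the regret satisfies ∑_{t=1}^T g_t(w_t − u) ≥ (T/2)·u = c·u·log(u)·√T·log 2 + (T/4)·exp(T^{1/2}/(4·log(2)·c)). -/
open Finset

/- Against the losses `g_t = -1` every round with `w_t < u / 2` contributes at least `u / 2` to the
regret against `u`, so the regret is at least `(T / 2) u`. The choice `log u = √T / (4 log 2 · c)`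
makes `c · log u · √T · log 2 = T / 4`, which splits `(T / 2) u` into the two stated terms. -/

lemma card_div_two_mul_le_sum_neg_one_mul_sub {ι : Type*} (s : Finset ι) (w : ι → ℝ) (u : ℝ)
    (hw : ∀ t ∈ s, w t < 1 / 2 * u) :
    (#s / 2 : ℝ) * u ≤ ∑ t ∈ s, (-1 : ℝ) * (w t - u) :=
  calc (#s / 2 : ℝ) * u = ∑ _t ∈ s, 1 / 2 * u := by rw [sum_const, nsmul_eq_mul]; ring
    _ ≤ ∑ t ∈ s, (-1 : ℝ) * (w t - u) :=
      sum_le_sum fun t ht => by linarith [hw t ht]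

lemma mul_sqrt_div_mul_sqrt_mul_eq_div_four {c k T : ℝ} (hc : c ≠ 0) (hk : k ≠ 0) (hT : 0 ≤ T) :
    c * (√T / (4 * k * c)) * √T * k = T / 4 := by
  have hsq : √T * √T = T := Real.mul_self_sqrt hT
  field_simp
  linear_combination hsq

/-- Lower bound, Case 1 inequality from the proof of Theorem 1. -/
theorem stmt17 (c : ℝ) (hc : 0 < c) :
    ∃ T₀ : ℕ, ∀ T : ℕ, T₀ ≤ T → ∀ w : ℕ → ℝ,
      (∀ t ∈ Icc 1 T, w t < 1 / 2 * Real.exp (Real.sqrt T / (4 * Real.log 2 * c))) →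
      (T / 2 : ℝ) * Real.exp (Real.sqrt T / (4 * Real.log 2 * c)) ≤
          ∑ t ∈ Icc 1 T, (-1 : ℝ) * (w t - Real.exp (Real.sqrt T / (4 * Real.log 2 * c))) ∧
      (T / 2 : ℝ) * Real.exp (Real.sqrt T / (4 * Real.log 2 * c)) =
        c * Real.exp (Real.sqrt T / (4 * Real.log 2 * c)) *
            Real.log (Real.exp (Real.sqrt T / (4 * Real.log 2 * c))) *
            Real.sqrt T * Real.log 2 +
          (T / 4 : ℝ) * Real.exp (Real.sqrt T / (4 * Real.log 2 * c)) := by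
  refine ⟨0, fun T _ w hw => ⟨?_, ?_⟩⟩
  · simpa using card_div_two_mul_le_sum_neg_one_mul_sub (Icc 1 T) w _ hw
  · have key := mul_sqrt_div_mul_sqrt_mul_eq_div_four hc.ne' (Real.log_pos one_lt_two).ne'
      (Nat.cast_nonneg (α := ℝ) T)
    rw [Real.log_exp]
    linear_combination -Real.exp (√T / (4 * Real.log 2 * c)) * key
end
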